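/- arXiv:2007.05782 — 2 statements merged into one kernel-verified Lean document; each statement's English description precedes it below -/
import Mathlib

section
/- For every even n ≥ 2, the rational number 2^{n+2}(2^{n+2}−1) B_{n+2}/(n+2) is an integer, where B_k denotes the k-th Bernoulli number. -/
/-! The numbers `a_m = 2^{m+1} (2^{m+1} - 1) B_{m+1} / (m+1)` (corrected at `m = 0`) are the
exponential-generating-function coefficients of `tanh x = 1 - 2 / (e^{2x} + 1)`, as one reads off
from `B(2x) - B(x) = -x / (e^x + 1)` for the Bernoulli series `B(x) = x / (e^x - 1)`. Since
`tanh' = 1 - tanh²`, they satisfy `a_{m+1} = [m = 0] - ∑ₖ (m choose k) a_k a_{m-k}` with `a_0 = 0`,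
so they are integers by induction. -/

open PowerSeries Finset Nat

namespace PowerSeries

section Hurwitz

variable {R : Type*} [CommRing R]

theorem factorial_mul_coeff_mul (f g : R⟦X⟧) (m : ℕ) :
    (m ! : R) * coeff m (f * g) = ∑ p ∈ antidiagonal m,
      (m.choose p.1 : R) * (p.1 ! * coeff p.1 f) * (p.2 ! * coeff p.2 g) := by
  rw [coeff_mul, mul_sum]
  refine sum_congr rfl fun p hp => ?_
  obtain rfl := mem_antidiagonal.mp hp
  rw [← add_choose_mul_factorial_mul_factorial, ← choose_symm_add]
  push_cast
  ring

theorem factorial_mul_coeff_mem_of_derivative_eq_one_sub_sq (S : Subring R) {f : R⟦X⟧}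
    (hf : d⁄dX R f = 1 - f ^ 2) (h0 : constantCoeff f ∈ S) (m : ℕ) :
    (m ! : R) * coeff m f ∈ S := by
  induction m using Nat.strong_induction_on with
  | _ m ih =>
  cases m with
  | zero => simpa using h0
  | succ m =>
    have hrec : ((m + 1)! : R) * coeff (m + 1) f = m ! * coeff m 1 - m ! * coeff m (f * f) := by
      rw [← mul_sub, ← map_sub, ← sq, ← hf, coeff_derivative, factorial_succ]
      push_cast
      ring
    rw [hrec, factorial_mul_coeff_mul]
    refine S.sub_mem (S.mul_mem (natCast_mem S _) ?_) (S.sum_mem fun p hp => ?_)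
    · rw [coeff_one]
      split_ifs
      exacts [S.one_mem, S.zero_mem]
    · have hp := mem_antidiagonal.mp hp
      exact S.mul_mem (S.mul_mem (natCast_mem S _) (ih _ (by omega))) (ih _ (by omega))

end Hurwitz

theorem exp_mul_exp_self {A : Type*} [CommRing A] [Algebra ℚ A] :
    exp A * exp A = rescale 2 (exp A) := by
  simpa [rescale_one, one_add_one_eq_two] using exp_mul_exp_eq_exp_add (1 : A) 1

theorem rescale_two_bernoulliPowerSeries_sub_mul_exp_add_one :
    (rescale 2 (bernoulliPowerSeries ℚ) - bernoulliPowerSeries ℚ) * (exp ℚ + 1) = -X := by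
  have hB := bernoulliPowerSeries_mul_exp_sub_one ℚ
  have h2B := congrArg (rescale (2 : ℚ)) hB
  rw [map_mul, map_sub, map_one, rescale_X, ← exp_mul_exp_self, map_ofNat] at h2B
  have hE : exp ℚ - 1 ≠ 0 := fun h => by simpa using congrArg (coeff 1) h
  refine mul_right_cancel₀ hE ?_
  linear_combination h2B - (exp ℚ + 1) * hB

/-- Mathlib's `bernoulli 1 = -1/2` makes the general term `-1` at `m = 0`, whence the
correction. -/
noncomputable def tanhSeries : ℚ⟦X⟧ := mk fun m =>
  2 ^ (m + 1) * (2 ^ (m + 1) - 1) * bernoulli (m + 1) / (m + 1)! + if m = 0 then 1 else 0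

theorem constantCoeff_tanhSeries : constantCoeff tanhSeries = 0 := by
  norm_num [tanhSeries, bernoulli_one]

theorem X_mul_tanhSeries :
    X * tanhSeries =
      rescale 2 (rescale 2 (bernoulliPowerSeries ℚ) - bernoulliPowerSeries ℚ) + X := by
  ext (_ | n)
  · simp only [coeff_zero_X_mul, map_add, map_sub, coeff_rescale, coeff_zero_X]
    ring
  · rw [coeff_succ_X_mul]
    simp only [tanhSeries, bernoulliPowerSeries, coeff_mk, map_add, map_sub, coeff_rescale,
      coeff_X, eq_ratCast, Rat.cast_id]
    rcases n with _ | n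
    · norm_num [bernoulli_one]
    · simp only [add_eq_zero, one_ne_zero, and_false, if_false, add_eq_right]
      ring

theorem tanhSeries_mul_exp_mul_exp_add_one :
    tanhSeries * (exp ℚ * exp ℚ + 1) = exp ℚ * exp ℚ - 1 := by
  have h := congrArg (rescale (2 : ℚ)) rescale_two_bernoulliPowerSeries_sub_mul_exp_add_one
  rw [map_mul, map_add, map_one, map_neg, rescale_X, ← exp_mul_exp_self, map_ofNat] at h
  refine mul_left_cancel₀ X_ne_zero ?_
  linear_combination (exp ℚ * exp ℚ + 1) * X_mul_tanhSeries + h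

theorem derivative_tanhSeries : d⁄dX ℚ tanhSeries = 1 - tanhSeries ^ 2 := by
  have hT := tanhSeries_mul_exp_mul_exp_add_one
  have hdT := congrArg (d⁄dX ℚ) hT
  simp only [map_sub, map_add, Derivation.leibniz, Derivation.map_one_eq_zero, derivative_exp ℚ,
    smul_eq_mul] at hdT
  have hE : exp ℚ * exp ℚ + 1 ≠ 0 := fun h => by simpa using congrArg constantCoeff h
  refine mul_right_cancel₀ (pow_ne_zero 2 hE) ?_
  linear_combination (exp ℚ * exp ℚ + 1) * hdT
    + (tanhSeries * (exp ℚ * exp ℚ + 1) - exp ℚ * exp ℚ - 1) * hT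

theorem factorial_mul_coeff_succ_tanhSeries (n : ℕ) :
    ((n + 1)! : ℚ) * coeff (n + 1) tanhSeries =
      2 ^ (n + 2) * (2 ^ (n + 2) - 1) * bernoulli (n + 2) / (n + 2) := by
  rw [tanhSeries, coeff_mk, if_neg n.succ_ne_zero, add_zero, factorial_succ (n + 1)]
  push_cast
  field_simp
  ring

end PowerSeries

/-- For every even n ≥ 2, the rational number 2^{n+2}(2^{n+2}−1)B_{n+2}/(n+2) is an integer. -/
theorem stmt5 : ∀ n : ℕ, 2 ≤ n → Even n →
    ∃ m : ℤ, (2 : ℚ) ^ (n + 2) * (2 ^ (n + 2) - 1) * bernoulli (n + 2) / (n + 2) = m := by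
  intro n _ _
  obtain ⟨m, hm⟩ := factorial_mul_coeff_mem_of_derivative_eq_one_sub_sq (Int.castRingHom ℚ).range
    derivative_tanhSeries (by simp [constantCoeff_tanhSeries]) (n + 1)
  exact ⟨m, by rw [← factorial_mul_coeff_succ_tanhSeries, ← hm, eq_intCast]⟩
end

section
/- Define w_n ∈ ℚ[t_1,t_2,...] by the identity β(z) = z·exp(Σ_{n≥1} w_n z^n/n!) where β(z) = z + Σ_{n≥1} t_n z^{n+1}/(n+1)!. If an operator S acts on power series by S(β(z)) = β(z)² and acts as a derivation on ℚ[t_1,t_2,...][[z]] fixing z, then Σ_{n≥1} S(w_n) z^n/n! = β(z), hence S(w_n) = t_{n−1} (with t_0 := 1). -/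
/-!
Extend `d` coefficientwise to a derivation `D` of `A⟦X⟧`; it kills `X` and commutes with `d/dX`.
Applying `D` to `X β' = β + X W' β` and using `D β = β²` gives
`2 X β β' = β² + X W' β² + X β (D W)'`; subtracting `β` times the original identity leaves
`X β (D W)' = X β β'`. Over a domain this forces `(D W)' = β'`, and both `D W` and `β` have
zero constant term, so `D W = β`. Comparing coefficients then gives `d w_n = t_{n-1}`.
-/

namespace Derivation

open PowerSeries

variable {R A : Type*} [CommRing R] [CommRing A] [Algebra R A]

noncomputable def powerSeries (d : Derivation R A A) : Derivation R A⟦X⟧ A⟦X⟧ :=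
  Derivation.mk'
    { toFun := fun f => PowerSeries.mk fun n => d (coeff n f)
      map_add' := fun f g => by ext n; simp
      map_smul' := fun r f => by ext n; simp }
    fun f g => by
      ext n
      simp only [LinearMap.coe_mk, AddHom.coe_mk, smul_eq_mul, mul_comm g, map_add, coeff_mk,
        coeff_mul, map_sum, leibniz, ← Finset.sum_add_distrib]
      refine Finset.sum_congr rfl fun p _ => ?_
      ring

variable (d : Derivation R A A)

theorem powerSeries_eq_mk (f : A⟦X⟧) :
    d.powerSeries f = PowerSeries.mk fun n => d (coeff n f) := by
  ext n
  simp [powerSeries]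

@[simp]
theorem coeff_powerSeries (f : A⟦X⟧) (n : ℕ) : coeff n (d.powerSeries f) = d (coeff n f) := by
  rw [powerSeries_eq_mk, coeff_mk]

@[simp]
theorem constantCoeff_powerSeries (f : A⟦X⟧) :
    constantCoeff (d.powerSeries f) = d (constantCoeff f) := by
  rw [← coeff_zero_eq_constantCoeff_apply, ← coeff_zero_eq_constantCoeff_apply,
    coeff_powerSeries]

@[simp]
theorem powerSeries_X : d.powerSeries X = 0 := by
  ext n
  rw [coeff_powerSeries, coeff_X]
  split_ifs <;> simp

theorem powerSeries_derivative (f : A⟦X⟧) :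
    d.powerSeries (derivative A f) = derivative A (d.powerSeries f) := by
  ext n
  simp only [coeff_powerSeries, coeff_derivative, leibniz, map_add, map_natCast, map_one_eq_zero,
    add_zero, smul_eq_mul, mul_zero, zero_add]
  ring

end Derivation

section

open PowerSeries

variable {A : Type*} [CommRing A]

theorem PowerSeries.constantCoeff_eq_zero_of_X_mul_derivative_eq {β W : A⟦X⟧}
    (h : X * derivative A β = β + X * derivative A W * β) : constantCoeff β = 0 := by
  simpa using (congrArg constantCoeff h).symm

variable {R : Type*} [CommRing R] [IsDomain A] [IsAddTorsionFree A] [Algebra R A]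

theorem Derivation.powerSeries_eq_of_X_mul_derivative_eq (d : Derivation R A A) {β W : A⟦X⟧}
    (hβ : β ≠ 0) (hW : d (constantCoeff W) = 0)
    (hexp : X * derivative A β = β + X * derivative A W * β) (hS : d.powerSeries β = β ^ 2) :
    d.powerSeries W = β := by
  have hD := congrArg d.powerSeries hexp
  simp only [leibniz, map_add, powerSeries_X, powerSeries_derivative, hS, leibniz_pow,
    smul_eq_mul, mul_zero, add_zero] at hD
  have hcancel : X * β * derivative A (d.powerSeries W) = X * β * derivative A β := by
    linear_combination β * hexp - hD
  refine derivative.ext (mul_left_cancel₀ (mul_ne_zero X_ne_zero hβ) hcancel) ?_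
  rw [constantCoeff_powerSeries, hW, constantCoeff_eq_zero_of_X_mul_derivative_eq hexp]

end

open MvPolynomial in
/-- Define w_n by β(z) = z·exp(Σ_{n≥1} w_n z^n/n!) (encoded by the equivalent
differential identity z·β'(z) = β(z) + z·W'(z)·β(z), where W = Σ w_n z^n/n!), where
β(z) = z + Σ_{n≥1} t_n z^{n+1}/(n+1)!. If S acts coefficientwise on power series through a
ℚ-derivation d of ℚ[t_1,t_2,...] and S(β) = β², then Σ_{n≥1} S(w_n) z^n/n! = β(z),
hence S(w_n) = t_{n−1} (with t_0 := 1). -/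
theorem stmt14 (d : Derivation ℚ (MvPolynomial ℕ ℚ) (MvPolynomial ℕ ℚ))
    (β W : PowerSeries (MvPolynomial ℕ ℚ)) (w : ℕ → MvPolynomial ℕ ℚ)
    (hβ : β = PowerSeries.mk fun m => if m = 0 then 0 else if m = 1 then 1
      else X (m - 1) * C ((Nat.factorial m : ℚ))⁻¹)
    (hW : W = PowerSeries.mk fun m => if m = 0 then 0
      else w m * C ((Nat.factorial m : ℚ))⁻¹)
    (hexp : PowerSeries.X * PowerSeries.derivative (MvPolynomial ℕ ℚ) β =
      β + PowerSeries.X * PowerSeries.derivative (MvPolynomial ℕ ℚ) W * β)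
    (hS : (PowerSeries.mk fun m => d (PowerSeries.coeff m β)) = β ^ 2)
    (t : ℕ → MvPolynomial ℕ ℚ) (ht : ∀ j, t j = if j = 0 then 1 else X j) :
    (PowerSeries.mk fun m => if m = 0 then 0
        else d (w m) * C ((Nat.factorial m : ℚ))⁻¹) = β ∧
    ∀ n, 1 ≤ n → d (w n) = t (n - 1) := by
  have hseries : (PowerSeries.mk fun m => if m = 0 then 0
      else d (w m) * C ((Nat.factorial m : ℚ))⁻¹) = d.powerSeries W := by
    ext m : 1
    simp only [Derivation.coeff_powerSeries, hW, PowerSeries.coeff_mk]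
    split_ifs
    · simp
    · rw [Derivation.leibniz, ← algebraMap_eq, Derivation.map_algebraMap, smul_zero, zero_add,
        smul_eq_mul, mul_comm]
  have hβ0 : β ≠ 0 := ne_of_apply_ne (PowerSeries.coeff 1) (by simp [hβ])
  have hSβ : d.powerSeries β = β ^ 2 := by rw [Derivation.powerSeries_eq_mk, hS]
  have hWβ : d.powerSeries W = β :=
    d.powerSeries_eq_of_X_mul_derivative_eq hβ0 (by simp [hW]) hexp hSβ
  refine ⟨hseries.trans hWβ, fun n hn => ?_⟩
  have hcoeff := congrArg (PowerSeries.coeff n) (hseries.trans hWβ)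
  have hβn : PowerSeries.coeff n β = t (n - 1) * C ((Nat.factorial n : ℚ))⁻¹ := by
    obtain rfl | hn := hn.eq_or_lt
    · simp [hβ, ht]
    · simp [hβ, ht, hn.ne', (Nat.sub_pos_of_lt hn).ne', Nat.one_le_iff_ne_zero.mp hn.le]
  rw [hβn, PowerSeries.coeff_mk, if_neg (by omega)] at hcoeff
  exact mul_right_cancel₀ (by simp [Nat.factorial_ne_zero]) hcoeff
end
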